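/- Let P > 0, λ > 1/(1+P) with λ ≠ 1, and q ≠ 0, r ≠ 0 be real numbers, and set θ = q/(1−λ). Let g(x) = a (1 − (λ−1)|x|^{P})_+^{1/(λ−1)} with a > 0 the normalizing constant making g a probability density. Then for every probability density function f that is differentiable with f' < 0 on its interval support (x_i, x_f), the down-moment–Fisher inequality holds: Ξ_{P,(2−r)θ,θ}[f]^{1/P} · φ_{q,r}[f]^{qr/(λ−1)} ≥ σ_P[g] / N_λ[g], whenever all quantities are finite. -/

import Mathlib

/-!
Write `u(x) = ∫_x^{x_f} W` for the weight `W = f^{1-(2-r)θ} |f'|^θ`, so that `Ξ = ∫ u^P f` and,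
because `θ (1 - λ) = q`, the Fisher integrand is `f^λ W^{1-λ}`. After rescaling `W` so that the
`P`-th moment of `u` under `f` equals `σ_P[g]^P`, compare `f` with the profile `k = g ∘ u`:

* `∫ f k^{λ-1} ≥ ∫ g^λ` (with equality when `λ < 1`), since `g^{λ-1}` is the positive part of an
  affine function of `|x|^P` and the two `P`-th moments agree;
* `∫ k^λ W ≤ ∫ g^λ`, since the substitution `y = u(x)` maps `W(x) dx` onto (at most) Lebesgue
  measure on `(0, ∞)` and `g^λ` decreases there;
* Hölder's inequality with exponents `(λ, 1 - λ)` (or `(1/λ, 1 - 1/λ)` when `λ > 1`) links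
  `∫ f^λ W^{1-λ}` with these two integrals, since `f^λ W^{1-λ} = (f k^{λ-1})^λ (k^λ W)^{1-λ}`.
-/

open MeasureTheory Set Filter Topology

noncomputable section

def intIoo (a b : EReal) : Set ℝ := {x : ℝ | a < (x : EReal) ∧ (x : EReal) < b}

open scoped ENNReal

theorem integral_rpow_mul_rpow_le {α : Type*} [MeasurableSpace α] {μ : Measure α} {φ ψ : α → ℝ}
    (hφ : Integrable φ μ) (hψ : Integrable ψ μ) (hφ0 : 0 ≤ᵐ[μ] φ) (hψ0 : 0 ≤ᵐ[μ] ψ)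
    {p q : ℝ} (hp : 0 ≤ p) (hq : 0 ≤ q) (hpq : p + q = 1) :
    ∫ x, φ x ^ p * ψ x ^ q ∂μ ≤ (∫ x, φ x ∂μ) ^ p * (∫ x, ψ x ∂μ) ^ q := by
  have hφ' := integral_nonneg_of_ae hφ0
  have hψ' := integral_nonneg_of_ae hψ0
  rw [← ENNReal.ofReal_le_ofReal_iff (by positivity)]
  calc ENNReal.ofReal (∫ x, φ x ^ p * ψ x ^ q ∂μ)
      ≤ ∫⁻ x, ENNReal.ofReal (φ x ^ p * ψ x ^ q) ∂μ := by
        have hmeas : AEStronglyMeasurable (fun x => φ x ^ p * ψ x ^ q) μ :=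
          ((hφ.1.aemeasurable.pow_const p).mul (hψ.1.aemeasurable.pow_const q)).aestronglyMeasurable
        rw [integral_eq_lintegral_of_nonneg_ae ((hφ0.and hψ0).mono fun x hx =>
          mul_nonneg (Real.rpow_nonneg hx.1 _) (Real.rpow_nonneg hx.2 _)) hmeas]
        exact ENNReal.ofReal_toReal_le
    _ = ∫⁻ x, ENNReal.ofReal (φ x) ^ p * ENNReal.ofReal (ψ x) ^ q ∂μ := by
        refine lintegral_congr_ae ((hφ0.and hψ0).mono fun x ⟨hx, hy⟩ => ?_)
        dsimp only
        rw [ENNReal.ofReal_mul (Real.rpow_nonneg hx _), ENNReal.ofReal_rpow_of_nonneg hx hp,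
          ENNReal.ofReal_rpow_of_nonneg hy hq]
    _ ≤ (∫⁻ x, ENNReal.ofReal (φ x) ∂μ) ^ p * (∫⁻ x, ENNReal.ofReal (ψ x) ∂μ) ^ q :=
        ENNReal.lintegral_mul_norm_pow_le hφ.1.aemeasurable.ennreal_ofReal
          hψ.1.aemeasurable.ennreal_ofReal hp hq hpq
    _ = ENNReal.ofReal ((∫ x, φ x ∂μ) ^ p * (∫ x, ψ x ∂μ) ^ q) := by
        rw [← ofReal_integral_eq_lintegral_ofReal hφ hφ0,
          ← ofReal_integral_eq_lintegral_ofReal hψ hψ0,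
          ENNReal.ofReal_mul (by positivity), ENNReal.ofReal_rpow_of_nonneg hφ' hp,
          ENNReal.ofReal_rpow_of_nonneg hψ' hq]

theorem withDensity_setOf_tail_le_le (w : ℝ → ℝ≥0∞) (c : ℝ≥0∞) :
    volume.withDensity w {x | ∫⁻ t in Ioi x, w t ≤ c} ≤ c := by
  set ν := volume.withDensity w
  set D := {x | ∫⁻ t in Ioi x, w t ≤ c}
  -- `D` is an up-set: apart from a possible least element, it is covered by rays `(q, ∞)`,
  -- `q ∈ D ∩ ℚ`, each of `ν`-measure `∫_q^∞ w ≤ c`.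
  have hcover : D ⊆ (⋃ q : {q : ℚ // (q : ℝ) ∈ D}, Ioi (q : ℝ)) ∪ {y ∈ D | ∀ z ∈ D, y ≤ z} := by
    intro y hy
    by_cases hmin : ∀ z ∈ D, y ≤ z
    · exact Or.inr ⟨hy, hmin⟩
    push Not at hmin
    obtain ⟨z, hz, hzy⟩ := hmin
    obtain ⟨q, hzq, hqy⟩ := exists_rat_btwn hzy
    exact Or.inl (mem_iUnion.2 ⟨⟨q, (lintegral_mono_set (Ioi_subset_Ioi hzq.le)).trans hz⟩, hqy⟩)
  have hmin_null : ν {y ∈ D | ∀ z ∈ D, y ≤ z} = 0 :=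
    withDensity_absolutelyContinuous _ _
      (Set.Subsingleton.measure_zero (fun y hy z hz => le_antisymm (hy.2 z hz.1) (hz.2 y hy.1)) _)
  calc ν D ≤ ν (⋃ q : {q : ℚ // (q : ℝ) ∈ D}, Ioi (q : ℝ)) + 0 := by
        rw [← hmin_null]; exact (measure_mono hcover).trans (measure_union_le _ _)
    _ = ⨆ q : {q : ℚ // (q : ℝ) ∈ D}, ν (Ioi (q : ℝ)) := by
        rw [add_zero]
        exact Antitone.measure_iUnion fun x y hxy => Ioi_subset_Ioi (by exact_mod_cast hxy)
    _ ≤ c := iSup_le fun q => by rw [withDensity_apply' _]; exact q.2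

theorem lintegral_comp_tail_mul_le {w : ℝ → ℝ≥0∞} (hw : AEMeasurable w)
    (hfin : ∀ x, w x ≠ 0 → ∫⁻ t in Ioi x, w t ≠ ∞) {G : ℝ → ℝ} (hG : Measurable G)
    (hG0 : ∀ y, 0 ≤ G y) (hGanti : AntitoneOn G (Ioi 0)) :
    ∫⁻ x, ENNReal.ofReal (G (∫⁻ t in Ioi x, w t).toReal) * w x
      ≤ ∫⁻ y in Ioi 0, ENNReal.ofReal (G y) := by
  set u : ℝ → ℝ≥0∞ := fun x => ∫⁻ t in Ioi x, w t
  have hu : Measurable u :=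
    Antitone.measurable fun x y hxy => lintegral_mono_set (Ioi_subset_Ioi hxy)
  have hGu : Measurable fun x => G (u x).toReal := hG.comp hu.ennreal_toReal
  have hLHS : ∫⁻ x, ENNReal.ofReal (G (u x).toReal) * w x
      = ∫⁻ x, ENNReal.ofReal (G (u x).toReal) ∂volume.withDensity w := by
    rw [lintegral_withDensity_eq_lintegral_mul₀ hw hGu.ennreal_ofReal.aemeasurable]
    exact lintegral_congr fun x => mul_comm _ _
  rw [hLHS, lintegral_eq_lintegral_meas_lt _ (Eventually.of_forall fun x => hG0 _) hGu.aemeasurable,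
    lintegral_eq_lintegral_meas_lt _ (Eventually.of_forall fun x => hG0 _) hG.aemeasurable]
  refine setLIntegral_mono' measurableSet_Ioi fun s _ => ?_
  set E := {y | s < G y} ∩ Ioi 0
  -- `G` decreases on `(0, ∞)`, so `u x ∈ E` forces `(0, u x] ⊆ E`.
  have hlevel : {x | s < G (u x).toReal} ⊆ {x | u x ≤ volume E} ∪ {x | w x = 0} := by
    intro x hx
    by_cases hwx : w x = 0
    · exact Or.inr hwx
    refine Or.inl ?_
    have hsub : Ioc 0 (u x).toReal ⊆ E := fun z hz =>
      ⟨hx.trans_le (hGanti hz.1 (hz.1.trans_le hz.2) hz.2), hz.1⟩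
    calc u x = volume (Ioc 0 (u x).toReal) := by
          rw [Real.volume_Ioc, sub_zero, ENNReal.ofReal_toReal (hfin x hwx)]
      _ ≤ volume E := measure_mono hsub
  have hnull : volume.withDensity w {x | w x = 0} = 0 :=
    (withDensity_apply_eq_zero' hw).2 (by simp [← ofPred_and])
  calc volume.withDensity w {x | s < G (u x).toReal}
      ≤ volume.withDensity w {x | u x ≤ volume E} + 0 := by
        rw [← hnull]; exact (measure_mono hlevel).trans (measure_union_le _ _)
    _ ≤ volume E := by rw [add_zero]; exact withDensity_setOf_tail_le_le w _
    _ = (volume.restrict (Ioi 0)) {y | s < G y} := (Measure.restrict_apply' measurableSet_Ioi).symm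

def tailIntegral (I : Set ℝ) (W : ℝ → ℝ) (x : ℝ) : ℝ := ∫ t in I ∩ Ioi x, W t

section tailIntegral

variable {I : Set ℝ} {W : ℝ → ℝ}

theorem tailIntegral_nonneg (hI : MeasurableSet I) (hW0 : ∀ x ∈ I, 0 ≤ W x) (x : ℝ) :
    0 ≤ tailIntegral I W x :=
  setIntegral_nonneg (hI.inter measurableSet_Ioi) fun t ht => hW0 t ht.1

theorem antitoneOn_tailIntegral (hI : MeasurableSet I) (hW0 : ∀ x ∈ I, 0 ≤ W x)
    (hWint : ∀ x ∈ I, IntegrableOn W (I ∩ Ioi x)) : AntitoneOn (tailIntegral I W) I :=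
  fun x hx _ _ hxy => setIntegral_mono_set (hWint x hx)
    ((ae_restrict_mem (hI.inter measurableSet_Ioi)).mono fun t ht => hW0 t ht.1)
    (Eventually.of_forall fun _ ht => ⟨ht.1, hxy.trans_lt ht.2⟩)

theorem tailIntegral_pos (hI : IsOpen I) (hW : ∀ x ∈ I, 0 < W x)
    (hWint : ∀ x ∈ I, IntegrableOn W (I ∩ Ioi x)) {x : ℝ} (hx : x ∈ I) :
    0 < tailIntegral I W x := by
  obtain ⟨y, hxy, hIco⟩ := exists_Ico_subset_of_mem_nhds (hI.mem_nhds hx) ⟨x + 1, by linarith⟩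
  rw [tailIntegral, setIntegral_pos_iff_support_of_nonneg_ae
    ((ae_restrict_mem (hI.measurableSet.inter measurableSet_Ioi)).mono fun t ht => (hW t ht.1).le)
    (hWint x hx)]
  refine (isOpen_Ioo.measure_pos volume (nonempty_Ioo.2 hxy)).trans_le (measure_mono fun t ht => ?_)
  have htI : t ∈ I := hIco (Ioo_subset_Ico_self ht)
  exact ⟨(hW t htI).ne', htI, ht.1⟩

theorem lintegral_Ioi_indicator_ofReal (hI : MeasurableSet I) (hW0 : ∀ x ∈ I, 0 ≤ W x)
    (hWint : ∀ x ∈ I, IntegrableOn W (I ∩ Ioi x)) {x : ℝ} (hx : x ∈ I) :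
    ∫⁻ t in Ioi x, I.indicator (fun t => ENNReal.ofReal (W t)) t
      = ENNReal.ofReal (tailIntegral I W x) := by
  rw [lintegral_indicator hI, Measure.restrict_restrict hI, tailIntegral,
    ofReal_integral_eq_lintegral_ofReal (hWint x hx)
      ((ae_restrict_mem (hI.inter measurableSet_Ioi)).mono fun t ht => hW0 t ht.1)]

theorem setLIntegral_ofReal_comp_tailIntegral_mul_le (hI : MeasurableSet I)
    (hW : AEMeasurable W (volume.restrict I)) (hW0 : ∀ x ∈ I, 0 ≤ W x)
    (hWint : ∀ x ∈ I, IntegrableOn W (I ∩ Ioi x)) {G : ℝ → ℝ} (hG : Measurable G)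
    (hG0 : ∀ y, 0 ≤ G y) (hGanti : AntitoneOn G (Ioi 0)) :
    ∫⁻ x in I, ENNReal.ofReal (G (tailIntegral I W x) * W x) ≤ ∫⁻ y, ENNReal.ofReal (G y) := by
  set w := I.indicator fun t => ENNReal.ofReal (W t)
  have htail : ∀ x ∈ I, ∫⁻ t in Ioi x, w t = ENNReal.ofReal (tailIntegral I W x) :=
    fun x hx => lintegral_Ioi_indicator_ofReal hI hW0 hWint hx
  refine le_of_eq_of_le ?_ ((lintegral_comp_tail_mul_le
    ((aemeasurable_indicator_iff hI).2 hW.ennreal_ofReal) (fun x hx => ?_) hG hG0 hGanti).trans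
    (setLIntegral_le_lintegral _ _))
  · rw [← lintegral_indicator hI]
    refine lintegral_congr fun x => ?_
    by_cases hx : x ∈ I
    · rw [indicator_of_mem hx, indicator_of_mem hx, htail x hx,
        ENNReal.toReal_ofReal (tailIntegral_nonneg hI hW0 x), ENNReal.ofReal_mul (hG0 _)]
    · rw [indicator_of_notMem hx, indicator_of_notMem hx, mul_zero]
  · have hxI : x ∈ I := by_contra fun h => hx (indicator_of_notMem h _)
    rw [htail x hxI]
    exact ENNReal.ofReal_ne_top

theorem integrableOn_comp_tailIntegral_mul (hI : MeasurableSet I)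
    (hW : AEMeasurable W (volume.restrict I)) (hW0 : ∀ x ∈ I, 0 ≤ W x)
    (hWint : ∀ x ∈ I, IntegrableOn W (I ∩ Ioi x)) {G : ℝ → ℝ} (hG : Measurable G)
    (hG0 : ∀ y, 0 ≤ G y) (hGanti : AntitoneOn G (Ioi 0)) (hGint : Integrable G) :
    IntegrableOn (fun x => G (tailIntegral I W x) * W x) I := by
  have hmeas : AEMeasurable (fun x => G (tailIntegral I W x) * W x) (volume.restrict I) :=
    (hG.comp_aemeasurable (aemeasurable_restrict_of_antitoneOn hI
      (antitoneOn_tailIntegral hI hW0 hWint))).mul hW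
  exact ⟨hmeas.aestronglyMeasurable, (hasFiniteIntegral_iff_ofReal
    ((ae_restrict_mem hI).mono fun x hx => mul_nonneg (hG0 _) (hW0 x hx))).2
    ((setLIntegral_ofReal_comp_tailIntegral_mul_le hI hW hW0 hWint hG hG0 hGanti).trans_lt
      hGint.lintegral_lt_top)⟩

theorem setIntegral_comp_tailIntegral_mul_le (hI : MeasurableSet I)
    (hW : AEMeasurable W (volume.restrict I)) (hW0 : ∀ x ∈ I, 0 ≤ W x)
    (hWint : ∀ x ∈ I, IntegrableOn W (I ∩ Ioi x)) {G : ℝ → ℝ} (hG : Measurable G)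
    (hG0 : ∀ y, 0 ≤ G y) (hGanti : AntitoneOn G (Ioi 0)) (hGint : Integrable G) :
    ∫ x in I, G (tailIntegral I W x) * W x ≤ ∫ y, G y := by
  rw [← ENNReal.ofReal_le_ofReal_iff (integral_nonneg hG0),
    ofReal_integral_eq_lintegral_ofReal
      (integrableOn_comp_tailIntegral_mul hI hW hW0 hWint hG hG0 hGanti hGint)
      ((ae_restrict_mem hI).mono fun x hx => mul_nonneg (hG0 _) (hW0 x hx)),
    ofReal_integral_eq_lintegral_ofReal hGint (Eventually.of_forall hG0)]
  exact setLIntegral_ofReal_comp_tailIntegral_mul_le hI hW hW0 hWint hG hG0 hGanti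

end tailIntegral

def genGaussian (P lam a x : ℝ) : ℝ :=
  a * (max (1 - (lam - 1) * |x| ^ P) 0) ^ ((1 : ℝ) / (lam - 1))

section genGaussian

variable {P lam a : ℝ}

theorem one_le_max_one_sub_mul_abs_rpow (hlam : lam < 1) (x : ℝ) :
    1 ≤ max (1 - (lam - 1) * |x| ^ P) 0 :=
  le_max_of_le_left (by nlinarith [Real.rpow_nonneg (abs_nonneg x) P])

theorem genGaussian_nonneg (ha : 0 ≤ a) (x : ℝ) : 0 ≤ genGaussian P lam a x :=
  mul_nonneg ha (Real.rpow_nonneg (le_max_right _ _) _)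

theorem genGaussian_pos_of_lt_one (ha : 0 < a) (hlam : lam < 1) (x : ℝ) :
    0 < genGaussian P lam a x :=
  mul_pos ha (Real.rpow_pos_of_pos (one_pos.trans_le (one_le_max_one_sub_mul_abs_rpow hlam x)) _)

theorem genGaussian_rpow_sub_one (ha : 0 ≤ a) (hlam1 : lam ≠ 1) (x : ℝ) :
    genGaussian P lam a x ^ (lam - 1) = a ^ (lam - 1) * max (1 - (lam - 1) * |x| ^ P) 0 := by
  rw [genGaussian, Real.mul_rpow ha (Real.rpow_nonneg (le_max_right _ _) _),
    ← Real.rpow_mul (le_max_right _ _), one_div_mul_cancel (sub_ne_zero.2 hlam1), Real.rpow_one]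

theorem genGaussian_rpow (ha : 0 ≤ a) (hlam0 : lam ≠ 0) (hlam1 : lam ≠ 1) (x : ℝ) :
    genGaussian P lam a x ^ lam
      = a ^ (lam - 1)
        * (genGaussian P lam a x - (lam - 1) * (|x| ^ P * genGaussian P lam a x)) := by
  have hsplit : genGaussian P lam a x ^ lam
      = genGaussian P lam a x * genGaussian P lam a x ^ (lam - 1) := by
    rw [← Real.rpow_one_add' (genGaussian_nonneg ha x) (by simpa using hlam0)]
    ring_nf
  rw [hsplit, genGaussian_rpow_sub_one ha hlam1]
  rcases le_total 0 (1 - (lam - 1) * |x| ^ P) with hpos | hneg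
  · rw [max_eq_left hpos]; ring
  · have hzero : genGaussian P lam a x = 0 := by
      rw [genGaussian, max_eq_right hneg,
        Real.zero_rpow (one_div_ne_zero (sub_ne_zero.2 hlam1)), mul_zero]
    rw [hzero]; ring

theorem antitoneOn_genGaussian (hP : 0 ≤ P) (ha : 0 ≤ a) (hlam1 : lam ≠ 1) :
    AntitoneOn (genGaussian P lam a) (Ici 0) := by
  intro x hx y hy hxy
  have hpow : |x| ^ P ≤ |y| ^ P := by
    rw [abs_of_nonneg hx, abs_of_nonneg hy]
    exact Real.rpow_le_rpow hx hxy hP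
  refine mul_le_mul_of_nonneg_left ?_ ha
  rcases lt_or_gt_of_ne hlam1 with hlt | hgt
  · refine Real.rpow_le_rpow_of_nonpos ?_ (max_le_max ?_ le_rfl) ?_
    · exact one_pos.trans_le (one_le_max_one_sub_mul_abs_rpow hlt x)
    · nlinarith
    · exact (one_div_neg.2 (by linarith)).le
  · exact Real.rpow_le_rpow (le_max_right _ _) (max_le_max (by nlinarith) le_rfl)
      (one_div_pos.2 (by linarith)).le

theorem antitoneOn_genGaussian_rpow (hP : 0 ≤ P) (ha : 0 ≤ a) (hlam0 : 0 ≤ lam)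
    (hlam1 : lam ≠ 1) : AntitoneOn (fun x => genGaussian P lam a x ^ lam) (Ici 0) :=
  fun _ hx _ hy hxy => Real.rpow_le_rpow (genGaussian_nonneg ha _)
    (antitoneOn_genGaussian hP ha hlam1 hx hy hxy) hlam0

theorem continuous_genGaussian (hP : 0 ≤ P) (hlam1 : lam ≠ 1) :
    Continuous (genGaussian P lam a) := by
  refine continuous_const.mul (Continuous.rpow_const ?_ fun x => ?_)
  · exact (continuous_const.sub (continuous_const.mul
      (continuous_abs.rpow_const fun _ => Or.inr hP))).max continuous_const
  rcases lt_or_gt_of_ne hlam1 with hlt | hgt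
  · exact Or.inl (one_pos.trans_le (one_le_max_one_sub_mul_abs_rpow hlt x)).ne'
  · exact Or.inr (one_div_pos.2 (by linarith)).le

theorem exists_ne_zero_genGaussian_pos (hP : 0 < P) (ha : 0 < a) (hlam1 : lam ≠ 1) :
    ∃ x ≠ 0, 0 < genGaussian P lam a x := by
  have h0 : genGaussian P lam a 0 = a := by
    simp [genGaussian, Real.zero_rpow hP.ne']
  have hnear : ∀ᶠ x in 𝓝[≠] (0 : ℝ), 0 < genGaussian P lam a x :=
    nhdsWithin_le_nhds (((continuous_genGaussian hP.le hlam1).tendsto 0).eventually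
      (lt_mem_nhds (by rwa [h0])))
  obtain ⟨x, hx, hx0⟩ := (hnear.and self_mem_nhdsWithin).exists
  exact ⟨x, hx0, hx⟩

end genGaussian

section genGaussianIntegral

variable {P lam a : ℝ}

theorem integral_genGaussian_rpow (ha : 0 ≤ a) (hlam0 : lam ≠ 0) (hlam1 : lam ≠ 1)
    (hg1 : ∫ x, genGaussian P lam a x = 1)
    (hM : Integrable fun x => |x| ^ P * genGaussian P lam a x) :
    ∫ x, genGaussian P lam a x ^ lam
      = a ^ (lam - 1) * (1 - (lam - 1) * ∫ x, |x| ^ P * genGaussian P lam a x) := by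
  have hg : Integrable (genGaussian P lam a) :=
    Integrable.of_integral_ne_zero (by rw [hg1]; exact one_ne_zero)
  simp_rw [genGaussian_rpow ha hlam0 hlam1]
  rw [integral_const_mul, integral_sub hg (hM.const_mul _), integral_const_mul, hg1]

theorem integral_moment_genGaussian_pos (hP : 0 < P) (ha : 0 < a) (hlam1 : lam ≠ 1)
    (hM : Integrable fun x => |x| ^ P * genGaussian P lam a x) :
    0 < ∫ x, |x| ^ P * genGaussian P lam a x := by
  obtain ⟨x, hx0, hgx⟩ := exists_ne_zero_genGaussian_pos hP ha hlam1
  exact integral_pos_of_integrable_nonneg_nonzero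
    ((continuous_abs.rpow_const fun _ => Or.inr hP.le).mul (continuous_genGaussian hP.le hlam1))
    hM (fun x => mul_nonneg (Real.rpow_nonneg (abs_nonneg x) P) (genGaussian_nonneg ha.le x))
    (mul_pos (Real.rpow_pos_of_pos (abs_pos.2 hx0) P) hgx).ne'

theorem integral_genGaussian_rpow_pos (hP : 0 < P) (ha : 0 < a) (hlam0 : 0 < lam)
    (hlam1 : lam ≠ 1) (hN : Integrable fun x => genGaussian P lam a x ^ lam) :
    0 < ∫ x, genGaussian P lam a x ^ lam := by
  obtain ⟨x, -, hgx⟩ := exists_ne_zero_genGaussian_pos hP ha hlam1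
  exact integral_pos_of_integrable_nonneg_nonzero
    ((continuous_genGaussian hP.le hlam1).rpow_const fun _ => Or.inr hlam0.le)
    hN (fun x => Real.rpow_nonneg (genGaussian_nonneg ha.le x) lam)
    (Real.rpow_pos_of_pos hgx lam).ne'

variable {I : Set ℝ} {f v : ℝ → ℝ}

theorem setIntegral_mul_genGaussian_rpow_sub_one_of_lt_one (ha : 0 ≤ a) (hlam0 : 0 < lam)
    (hlam : lam < 1) (hg1 : ∫ x, genGaussian P lam a x = 1)
    (hM : Integrable fun x => |x| ^ P * genGaussian P lam a x)
    (hf : IntegrableOn f I) (hf1 : ∫ x in I, f x = 1)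
    (hvf : IntegrableOn (fun x => |v x| ^ P * f x) I)
    (hmom : ∫ x in I, |v x| ^ P * f x = ∫ x, |x| ^ P * genGaussian P lam a x) :
    IntegrableOn (fun x => f x * genGaussian P lam a (v x) ^ (lam - 1)) I ∧
      ∫ x in I, f x * genGaussian P lam a (v x) ^ (lam - 1)
        = ∫ x, genGaussian P lam a x ^ lam := by
  have hpt : ∀ x, f x * genGaussian P lam a (v x) ^ (lam - 1)
      = a ^ (lam - 1) * (f x - (lam - 1) * (|v x| ^ P * f x)) := fun x => by
    rw [genGaussian_rpow_sub_one ha hlam.ne, max_eq_left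
      (by nlinarith [Real.rpow_nonneg (abs_nonneg (v x)) P])]
    ring
  simp_rw [hpt]
  refine ⟨(hf.sub (hvf.const_mul _)).const_mul _, ?_⟩
  rw [integral_genGaussian_rpow ha hlam0.ne' hlam.ne hg1 hM, integral_const_mul,
    integral_sub hf (hvf.const_mul _), integral_const_mul, hf1, hmom]

theorem le_setIntegral_mul_genGaussian_rpow_sub_one_of_one_lt (hP : 0 ≤ P) (ha : 0 ≤ a)
    (hlam : 1 < lam) (hg1 : ∫ x, genGaussian P lam a x = 1)
    (hM : Integrable fun x => |x| ^ P * genGaussian P lam a x) (hI : MeasurableSet I)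
    (hf0 : ∀ x ∈ I, 0 ≤ f x) (hf : IntegrableOn f I) (hf1 : ∫ x in I, f x = 1)
    (hv : AEMeasurable v (volume.restrict I)) (hvf : IntegrableOn (fun x => |v x| ^ P * f x) I)
    (hmom : ∫ x in I, |v x| ^ P * f x = ∫ x, |x| ^ P * genGaussian P lam a x) :
    IntegrableOn (fun x => f x * genGaussian P lam a (v x) ^ (lam - 1)) I ∧
      ∫ x, genGaussian P lam a x ^ lam
        ≤ ∫ x in I, f x * genGaussian P lam a (v x) ^ (lam - 1) := by
  have hpt : ∀ x, f x * genGaussian P lam a (v x) ^ (lam - 1)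
      = a ^ (lam - 1) * (f x * max (1 - (lam - 1) * |v x| ^ P) 0) := fun x => by
    rw [genGaussian_rpow_sub_one ha hlam.ne']; ring
  have hmax_le : ∀ x, max (1 - (lam - 1) * |v x| ^ P) 0 ≤ 1 := fun x =>
    max_le (by nlinarith [Real.rpow_nonneg (abs_nonneg (v x)) P]) zero_le_one
  have hint : IntegrableOn (fun x => f x * genGaussian P lam a (v x) ^ (lam - 1)) I := by
    refine Integrable.mono' (hf.const_mul (a ^ (lam - 1))) ?_
      ((ae_restrict_mem hI).mono fun x hx => ?_)
    · have hg : Measurable (genGaussian P lam a) :=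
        (continuous_genGaussian hP (by linarith)).measurable
      exact (hf.1.aemeasurable.mul ((hg.comp_aemeasurable hv).pow_const _)).aestronglyMeasurable
    · rw [hpt, Real.norm_eq_abs, abs_of_nonneg (by have := hf0 x hx; positivity)]
      exact mul_le_mul_of_nonneg_left
        (mul_le_of_le_one_right (hf0 x hx) (hmax_le x)) (by positivity)
  refine ⟨hint, ?_⟩
  calc ∫ x, genGaussian P lam a x ^ lam
      = ∫ x in I, a ^ (lam - 1) * (f x - (lam - 1) * (|v x| ^ P * f x)) := by
        rw [integral_genGaussian_rpow ha (by linarith) hlam.ne' hg1 hM, integral_const_mul,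
          integral_sub hf (hvf.const_mul _), integral_const_mul, hf1, hmom]
    _ ≤ ∫ x in I, f x * genGaussian P lam a (v x) ^ (lam - 1) := by
        refine setIntegral_mono_on ((hf.sub (hvf.const_mul _)).const_mul _) hint hI fun x hx => ?_
        rw [hpt]
        refine mul_le_mul_of_nonneg_left ?_ (by positivity)
        calc f x - (lam - 1) * (|v x| ^ P * f x) = f x * (1 - (lam - 1) * |v x| ^ P) := by ring
          _ ≤ f x * max (1 - (lam - 1) * |v x| ^ P) 0 :=
            mul_le_mul_of_nonneg_left (le_max_left _ _) (hf0 x hx)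

end genGaussianIntegral

theorem setIntegral_pos_of_support_subset {α : Type*} [MeasurableSpace α] {μ : Measure α}
    {s : Set α} {f h : α → ℝ} (hs : MeasurableSet s) (hf0 : ∀ x ∈ s, 0 ≤ f x)
    (hf : IntegrableOn f s μ) (hfpos : 0 < ∫ x in s, f x ∂μ) (hh0 : ∀ x ∈ s, 0 ≤ h x)
    (hh : IntegrableOn h s μ) (hfh : ∀ x ∈ s, f x ≠ 0 → h x ≠ 0) :
    0 < ∫ x in s, h x ∂μ := by
  rw [setIntegral_pos_iff_support_of_nonneg_ae ((ae_restrict_mem hs).mono hf0) hf] at hfpos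
  rw [setIntegral_pos_iff_support_of_nonneg_ae ((ae_restrict_mem hs).mono hh0) hh]
  exact hfpos.trans_le (measure_mono fun x hx => ⟨hfh x hx.2 hx.1, hx.2⟩)

theorem mul_rpow_sub_one_rpow_mul_rpow_eq {lam b k w t : ℝ} (hb : 0 ≤ b) (hk : 0 < k)
    (hw : 0 ≤ w) (ht : 0 < t) :
    (b * k ^ (lam - 1)) ^ lam * (k ^ lam * (t * w)) ^ (1 - lam)
      = t ^ (1 - lam) * (b ^ lam * w ^ (1 - lam)) := by
  have hkk : (k ^ (lam - 1)) ^ lam * (k ^ lam) ^ (1 - lam) = 1 := by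
    rw [← Real.rpow_mul hk.le, ← Real.rpow_mul hk.le, ← Real.rpow_add hk]
    ring_nf
    exact Real.rpow_zero k
  rw [Real.mul_rpow hb (by positivity), Real.mul_rpow (by positivity) (by positivity),
    Real.mul_rpow ht.le hw]
  linear_combination (b ^ lam * t ^ (1 - lam) * w ^ (1 - lam)) * hkk

theorem rpow_mul_rpow_mul_rpow_eq {lam b k w t : ℝ} (hlam : lam ≠ 0) (hb : 0 ≤ b) (hk : 0 ≤ k)
    (hw : 0 < w) (ht : 0 < t) :
    (b ^ lam * w ^ (1 - lam)) ^ (1 / lam) * (k ^ lam * (t * w)) ^ (1 - 1 / lam)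
      = t ^ (1 - 1 / lam) * (b * k ^ (lam - 1)) := by
  have hww : (w ^ (1 - lam)) ^ (1 / lam) * w ^ (1 - 1 / lam) = 1 := by
    rw [← Real.rpow_mul hw.le, ← Real.rpow_add hw]
    field_simp
    ring_nf
    exact Real.rpow_zero w
  have hb' : (b ^ lam) ^ (1 / lam) = b := by
    rw [← Real.rpow_mul hb, mul_one_div_cancel hlam, Real.rpow_one]
  have hk' : (k ^ lam) ^ (1 - 1 / lam) = k ^ (lam - 1) := by
    rw [← Real.rpow_mul hk]; congr 1; field_simp
  rw [Real.mul_rpow (by positivity) (by positivity), Real.mul_rpow (by positivity) (by positivity),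
    Real.mul_rpow ht.le hw.le, hb', hk']
  linear_combination (b * k ^ (lam - 1) * t ^ (1 - 1 / lam)) * hww

theorem mul_rpow_le_rpow_of_lt_one {lam t F G : ℝ} (hlam : lam < 1) (ht : 0 < t) (hF : 0 < F)
    (hG : 0 < G) (h : t ^ (1 - lam) * F ≤ G) :
    t * G ^ (1 / (lam - 1)) ≤ F ^ (1 / (lam - 1)) := by
  rw [← Real.log_le_log_iff (by positivity) (by positivity), Real.log_mul ht.ne' (by positivity),
    Real.log_rpow hG, Real.log_rpow hF]
  rw [← Real.log_le_log_iff (by positivity) hG, Real.log_mul (by positivity) hF.ne',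
    Real.log_rpow ht] at h
  have hne : 1 - lam ≠ 0 := by linarith
  have e1 : 1 / (1 - lam) * (1 - lam) = 1 := by field_simp
  have e2 : 1 / (lam - 1) = -(1 / (1 - lam)) := by rw [← neg_sub, div_neg]
  have hc : 0 ≤ 1 / (1 - lam) := (one_div_pos.2 (by linarith)).le
  rw [e2]
  linear_combination (1 / (1 - lam)) * h - Real.log t * e1

theorem mul_rpow_le_rpow_of_one_lt {lam t F G : ℝ} (hlam : 1 < lam) (ht : 0 < t) (hF : 0 < F)
    (hG : 0 < G) (h : t ^ (1 - 1 / lam) * G ≤ F ^ (1 / lam) * G ^ (1 - 1 / lam)) :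
    t * G ^ (1 / (lam - 1)) ≤ F ^ (1 / (lam - 1)) := by
  rw [← Real.log_le_log_iff (by positivity) (by positivity), Real.log_mul ht.ne' (by positivity),
    Real.log_rpow hG, Real.log_rpow hF]
  rw [← Real.log_le_log_iff (by positivity) (by positivity), Real.log_mul (by positivity) hG.ne',
    Real.log_mul (by positivity) (by positivity), Real.log_rpow ht, Real.log_rpow hF,
    Real.log_rpow hG] at h
  have hne : lam - 1 ≠ 0 := by linarith
  have e1 : lam / (lam - 1) * (1 - 1 / lam) = 1 := by field_simp
  have e2 : lam / (lam - 1) * (1 / lam) = 1 / (lam - 1) := by field_simp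
  have e3 : lam / (lam - 1) - 1 = 1 / (lam - 1) := by field_simp; ring
  have hc : 0 ≤ lam / (lam - 1) := (div_pos (by linarith) (by linarith)).le
  linear_combination (lam / (lam - 1)) * h - Real.log t * e1 + Real.log F * e2
    - Real.log G * (e3 - e1)

section HoelderStep

variable {I : Set ℝ} {f W k : ℝ → ℝ} {lam t G : ℝ}

theorem mul_rpow_le_setIntegral_rpow_mul_rpow_of_lt_one (hI : MeasurableSet I)
    (hlam0 : 0 < lam) (hlam : lam < 1) (ht : 0 < t) (hG : 0 < G)
    (hf0 : ∀ x ∈ I, 0 ≤ f x) (hW0 : ∀ x ∈ I, 0 ≤ W x) (hk : ∀ x ∈ I, 0 < k x)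
    (hb : IntegrableOn (fun x => f x * k x ^ (lam - 1)) I)
    (hbG : ∫ x in I, f x * k x ^ (lam - 1) ≤ G)
    (hc : IntegrableOn (fun x => k x ^ lam * (t * W x)) I)
    (hcG : ∫ x in I, k x ^ lam * (t * W x) ≤ G)
    (hF : 0 < ∫ x in I, f x ^ lam * W x ^ (1 - lam)) :
    t * G ^ (1 / (lam - 1)) ≤ (∫ x in I, f x ^ lam * W x ^ (1 - lam)) ^ (1 / (lam - 1)) := by
  refine mul_rpow_le_rpow_of_lt_one hlam ht hF hG ?_
  have hb0 : 0 ≤ᵐ[volume.restrict I] fun x => f x * k x ^ (lam - 1) :=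
    (ae_restrict_mem hI).mono fun x hx => mul_nonneg (hf0 x hx) (Real.rpow_nonneg (hk x hx).le _)
  have hc0 : 0 ≤ᵐ[volume.restrict I] fun x => k x ^ lam * (t * W x) :=
    (ae_restrict_mem hI).mono fun x hx =>
      mul_nonneg (Real.rpow_nonneg (hk x hx).le _) (mul_nonneg ht.le (hW0 x hx))
  calc t ^ (1 - lam) * ∫ x in I, f x ^ lam * W x ^ (1 - lam)
      = ∫ x in I, (f x * k x ^ (lam - 1)) ^ lam * (k x ^ lam * (t * W x)) ^ (1 - lam) := by
        rw [← integral_const_mul]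
        exact setIntegral_congr_fun hI fun x hx =>
          (mul_rpow_sub_one_rpow_mul_rpow_eq (hf0 x hx) (hk x hx) (hW0 x hx) ht).symm
    _ ≤ (∫ x in I, f x * k x ^ (lam - 1)) ^ lam * (∫ x in I, k x ^ lam * (t * W x)) ^ (1 - lam) :=
        integral_rpow_mul_rpow_le hb hc hb0 hc0 hlam0.le (by linarith) (by ring)
    _ ≤ G ^ lam * G ^ (1 - lam) :=
        mul_le_mul (Real.rpow_le_rpow (integral_nonneg_of_ae hb0) hbG hlam0.le)
          (Real.rpow_le_rpow (integral_nonneg_of_ae hc0) hcG (by linarith))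
          (Real.rpow_nonneg (integral_nonneg_of_ae hc0) _) (by positivity)
    _ = G := by rw [← Real.rpow_add hG, add_sub_cancel, Real.rpow_one]

theorem mul_rpow_le_setIntegral_rpow_mul_rpow_of_one_lt (hI : MeasurableSet I)
    (hlam : 1 < lam) (ht : 0 < t) (hG : 0 < G)
    (hf0 : ∀ x ∈ I, 0 ≤ f x) (hW : ∀ x ∈ I, 0 < W x) (hk : ∀ x ∈ I, 0 ≤ k x)
    (hGb : G ≤ ∫ x in I, f x * k x ^ (lam - 1))
    (hc : IntegrableOn (fun x => k x ^ lam * (t * W x)) I)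
    (hcG : ∫ x in I, k x ^ lam * (t * W x) ≤ G)
    (hF : IntegrableOn (fun x => f x ^ lam * W x ^ (1 - lam)) I)
    (hFpos : 0 < ∫ x in I, f x ^ lam * W x ^ (1 - lam)) :
    t * G ^ (1 / (lam - 1)) ≤ (∫ x in I, f x ^ lam * W x ^ (1 - lam)) ^ (1 / (lam - 1)) := by
  refine mul_rpow_le_rpow_of_one_lt hlam ht hFpos hG ?_
  have hF0 : 0 ≤ᵐ[volume.restrict I] fun x => f x ^ lam * W x ^ (1 - lam) :=
    (ae_restrict_mem hI).mono fun x hx =>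
      mul_nonneg (Real.rpow_nonneg (hf0 x hx) _) (Real.rpow_nonneg (hW x hx).le _)
  have hc0 : 0 ≤ᵐ[volume.restrict I] fun x => k x ^ lam * (t * W x) :=
    (ae_restrict_mem hI).mono fun x hx =>
      mul_nonneg (Real.rpow_nonneg (hk x hx) _) (mul_nonneg ht.le (hW x hx).le)
  have hinv : 0 ≤ 1 - 1 / lam := by
    rw [sub_nonneg, div_le_one (by linarith)]; exact hlam.le
  calc t ^ (1 - 1 / lam) * G
      ≤ t ^ (1 - 1 / lam) * ∫ x in I, f x * k x ^ (lam - 1) :=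
        mul_le_mul_of_nonneg_left hGb (by positivity)
    _ = ∫ x in I, (f x ^ lam * W x ^ (1 - lam)) ^ (1 / lam)
          * (k x ^ lam * (t * W x)) ^ (1 - 1 / lam) := by
        rw [← integral_const_mul]
        exact setIntegral_congr_fun hI fun x hx =>
          (rpow_mul_rpow_mul_rpow_eq (by linarith) (hf0 x hx) (hk x hx) (hW x hx) ht).symm
    _ ≤ (∫ x in I, f x ^ lam * W x ^ (1 - lam)) ^ (1 / lam)
          * (∫ x in I, k x ^ lam * (t * W x)) ^ (1 - 1 / lam) :=
        integral_rpow_mul_rpow_le hF hc hF0 hc0 (one_div_pos.2 (by linarith)).le hinv (by ring)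
    _ ≤ (∫ x in I, f x ^ lam * W x ^ (1 - lam)) ^ (1 / lam) * G ^ (1 - 1 / lam) :=
        mul_le_mul_of_nonneg_left (Real.rpow_le_rpow (integral_nonneg_of_ae hc0) hcG hinv)
          (by positivity)

end HoelderStep

theorem mul_rpow_integral_genGaussian_rpow_le_of_moment_eq {P lam a t : ℝ} (hP : 0 < P)
    (hlam0 : 0 < lam) (hlam1 : lam ≠ 1) (ha : 0 < a) (hg1 : ∫ x, genGaussian P lam a x = 1)
    (hM : Integrable fun x => |x| ^ P * genGaussian P lam a x)
    (hN : Integrable fun x => genGaussian P lam a x ^ lam)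
    (hN0 : 0 < ∫ x, genGaussian P lam a x ^ lam)
    {I : Set ℝ} (hI : MeasurableSet I) {f W : ℝ → ℝ}
    (hf0 : ∀ x ∈ I, 0 ≤ f x) (hf : IntegrableOn f I) (hf1 : ∫ x in I, f x = 1)
    (hW : AEMeasurable W (volume.restrict I)) (hW0 : ∀ x ∈ I, 0 < W x)
    (hWint : ∀ x ∈ I, IntegrableOn W (I ∩ Ioi x))
    (hF : IntegrableOn (fun x => f x ^ lam * W x ^ (1 - lam)) I)
    (hF0 : 0 < ∫ x in I, f x ^ lam * W x ^ (1 - lam)) (ht : 0 < t)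
    (hmomI : IntegrableOn (fun x => |t * tailIntegral I W x| ^ P * f x) I)
    (hmom : ∫ x in I, |t * tailIntegral I W x| ^ P * f x = ∫ x, |x| ^ P * genGaussian P lam a x) :
    t * (∫ x, genGaussian P lam a x ^ lam) ^ (1 / (lam - 1))
      ≤ (∫ x in I, f x ^ lam * W x ^ (1 - lam)) ^ (1 / (lam - 1)) := by
  set g := genGaussian P lam a
  set u := tailIntegral I W
  have htail : ∀ x, tailIntegral I (fun y => t * W y) x = t * u x :=
    fun x => integral_const_mul _ _
  have hGanti : AntitoneOn (fun y => g y ^ lam) (Ioi 0) :=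
    (antitoneOn_genGaussian_rpow hP.le ha.le hlam0.le hlam1).mono Ioi_subset_Ici_self
  have hGmeas : Measurable fun y => g y ^ lam :=
    (continuous_genGaussian hP.le hlam1).measurable.pow_const _
  have hG0 : ∀ y, 0 ≤ g y ^ lam := fun y => Real.rpow_nonneg (genGaussian_nonneg ha.le y) _
  have htW0 : ∀ x ∈ I, 0 ≤ t * W x := fun x hx => mul_nonneg ht.le (hW0 x hx).le
  have htWint : ∀ x ∈ I, IntegrableOn (fun y => t * W y) (I ∩ Ioi x) :=
    fun x hx => (hWint x hx).const_mul t
  have hc := integrableOn_comp_tailIntegral_mul hI (hW.const_mul t) htW0 htWint hGmeas hG0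
    hGanti hN
  have hcN := setIntegral_comp_tailIntegral_mul_le hI (hW.const_mul t) htW0 htWint hGmeas hG0
    hGanti hN
  simp only [htail] at hc hcN
  rcases lt_or_gt_of_ne hlam1 with hlt | hgt
  · obtain ⟨hb, hbN⟩ := setIntegral_mul_genGaussian_rpow_sub_one_of_lt_one ha.le hlam0 hlt hg1
      hM hf hf1 hmomI hmom
    exact mul_rpow_le_setIntegral_rpow_mul_rpow_of_lt_one (k := fun x => g (t * u x)) hI hlam0
      hlt ht hN0 hf0 (fun x hx => (hW0 x hx).le)
      (fun x _ => genGaussian_pos_of_lt_one ha hlt _) hb hbN.le hc hcN hF0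
  · have hv : AEMeasurable (fun x => t * u x) (volume.restrict I) :=
      (aemeasurable_restrict_of_antitoneOn hI
        (antitoneOn_tailIntegral hI (fun x hx => (hW0 x hx).le) hWint)).const_mul t
    obtain ⟨-, hNb⟩ := le_setIntegral_mul_genGaussian_rpow_sub_one_of_one_lt hP.le ha.le hgt
      hg1 hM hI hf0 hf hf1 hv hmomI hmom
    exact mul_rpow_le_setIntegral_rpow_mul_rpow_of_one_lt (k := fun x => g (t * u x)) hI hgt
      ht hN0 hf0 hW0 (fun x _ => genGaussian_nonneg ha.le _) hNb hc hcN hF hF0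

theorem down_moment_fisher_inequality_of_weight {P lam a : ℝ} (hP : 0 < P) (hlam0 : 0 < lam)
    (hlam1 : lam ≠ 1) (ha : 0 < a) (hg1 : ∫ x, genGaussian P lam a x = 1)
    (hM : Integrable fun x => |x| ^ P * genGaussian P lam a x)
    (hN : Integrable fun x => genGaussian P lam a x ^ lam)
    {I : Set ℝ} (hI : IsOpen I) {f W : ℝ → ℝ}
    (hf0 : ∀ x ∈ I, 0 ≤ f x) (hf : IntegrableOn f I) (hf1 : ∫ x in I, f x = 1)
    (hW : AEMeasurable W (volume.restrict I)) (hW0 : ∀ x ∈ I, 0 < W x)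
    (hWint : ∀ x ∈ I, IntegrableOn W (I ∩ Ioi x))
    (hΞ : IntegrableOn (fun x => tailIntegral I W x ^ P * f x) I)
    (hF : IntegrableOn (fun x => f x ^ lam * W x ^ (1 - lam)) I) :
    (∫ x, |x| ^ P * genGaussian P lam a x) ^ (1 / P)
        / (∫ x, genGaussian P lam a x ^ lam) ^ (1 / (1 - lam))
      ≤ (∫ x in I, tailIntegral I W x ^ P * f x) ^ (1 / P)
        * (∫ x in I, f x ^ lam * W x ^ (1 - lam)) ^ (1 / (lam - 1)) := by
  set u := tailIntegral I W
  set M := ∫ x, |x| ^ P * genGaussian P lam a x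
  set N := ∫ x, genGaussian P lam a x ^ lam
  set Ξ := ∫ x in I, u x ^ P * f x
  set F := ∫ x in I, f x ^ lam * W x ^ (1 - lam)
  have hIm := hI.measurableSet
  have hu : ∀ x ∈ I, 0 < u x := fun x hx => tailIntegral_pos hI hW0 hWint hx
  have hfI : 0 < ∫ x in I, f x := hf1 ▸ one_pos
  have hM0 : 0 < M := integral_moment_genGaussian_pos hP ha hlam1 hM
  have hΞ0 : 0 < Ξ := setIntegral_pos_of_support_subset hIm hf0 hf hfI
    (fun x hx => mul_nonneg (Real.rpow_nonneg (hu x hx).le _) (hf0 x hx)) hΞ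
    (fun x hx hfx => mul_ne_zero (Real.rpow_pos_of_pos (hu x hx) P).ne' hfx)
  have hF0 : 0 < F := setIntegral_pos_of_support_subset hIm hf0 hf hfI
    (fun x hx => mul_nonneg (Real.rpow_nonneg (hf0 x hx) _) (Real.rpow_nonneg (hW0 x hx).le _)) hF
    (fun x hx hfx => mul_ne_zero (Real.rpow_pos_of_pos ((hf0 x hx).lt_of_ne' hfx) _).ne'
      (Real.rpow_pos_of_pos (hW0 x hx) _).ne')
  have hN0 : 0 < N := integral_genGaussian_rpow_pos hP ha hlam0 hlam1 hN
  -- the scale at which the `P`-th moment of `u` under `f` is that of `g`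
  set t := (M / Ξ) ^ (1 / P)
  have ht : 0 < t := by positivity
  have hmoment : ∀ x ∈ I, |t * u x| ^ P * f x = t ^ P * (u x ^ P * f x) := fun x hx => by
    rw [abs_of_pos (mul_pos ht (hu x hx)), Real.mul_rpow ht.le (hu x hx).le, mul_assoc]
  have hmom : ∫ x in I, |t * u x| ^ P * f x = M := by
    rw [setIntegral_congr_fun hIm hmoment, integral_const_mul, ← Real.rpow_mul (by positivity),
      one_div_mul_cancel hP.ne', Real.rpow_one, div_mul_cancel₀ _ hΞ0.ne']
  have hkey := mul_rpow_integral_genGaussian_rpow_le_of_moment_eq hP hlam0 hlam1 ha hg1 hM hN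
    hN0 hIm hf0 hf hf1 hW hW0 hWint hF hF0 ht
    (IntegrableOn.congr_fun (hΞ.const_mul (t ^ P)) (fun x hx => (hmoment x hx).symm) hIm) hmom
  calc M ^ (1 / P) / N ^ (1 / (1 - lam)) = Ξ ^ (1 / P) * (t * N ^ (1 / (lam - 1))) := by
        rw [show t = M ^ (1 / P) / Ξ ^ (1 / P) from Real.div_rpow hM0.le hΞ0.le _,
          show 1 / (1 - lam) = -(1 / (lam - 1)) by rw [← neg_sub, div_neg], Real.rpow_neg hN0.le]
        field_simp
    _ ≤ Ξ ^ (1 / P) * F ^ (1 / (lam - 1)) := mul_le_mul_of_nonneg_left hkey (by positivity)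

theorem isOpen_intIoo (a b : EReal) : IsOpen (intIoo a b) :=
  isOpen_Ioo.preimage continuous_coe_real_ereal

theorem ordConnected_intIoo (a b : EReal) : (intIoo a b).OrdConnected :=
  ⟨fun _ hx _ hy _ hz => ⟨hx.1.trans_le (EReal.coe_le_coe_iff.2 hz.1),
    (EReal.coe_le_coe_iff.2 hz.2).trans_lt hy.2⟩⟩

theorem intIoo_coe_eq_inter_Ioi {a b : EReal} {x : ℝ} (hx : x ∈ intIoo a b) :
    intIoo x b = intIoo a b ∩ Ioi x :=
  ext fun _ => ⟨fun h => ⟨⟨hx.1.trans h.1, h.2⟩, EReal.coe_lt_coe_iff.1 h.1⟩,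
    fun h => ⟨EReal.coe_lt_coe_iff.2 h.2, h.1.2⟩⟩

theorem pos_of_hasDerivAt_neg {s : Set ℝ} (hs : IsOpen s) (hs' : s.OrdConnected) {f f' : ℝ → ℝ}
    (hf0 : ∀ x ∈ s, 0 ≤ f x) (hf : ∀ x ∈ s, HasDerivAt f (f' x) x) (hf' : ∀ x ∈ s, f' x < 0)
    {x : ℝ} (hx : x ∈ s) : 0 < f x := by
  have hanti : StrictAntiOn f s := strictAntiOn_of_deriv_neg hs'.convex
    (fun y hy => (hf y hy).continuousAt.continuousWithinAt)
    (fun y hy => by rw [hs.interior_eq] at hy; rw [(hf y hy).deriv]; exact hf' y hy)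
  obtain ⟨y, hxy, hIco⟩ := exists_Ico_subset_of_mem_nhds (hs.mem_nhds hx) ⟨x + 1, by linarith⟩
  obtain ⟨z, hxz, hzy⟩ := exists_between hxy
  have hz : z ∈ s := hIco ⟨hxz.le, hzy⟩
  exact (hf0 z hz).trans_lt (hanti hx hz hxz)

theorem abs_rpow_mul_rpow_eq {lam q r θ y d : ℝ} (hy : 0 < y) (hθ : θ * (1 - lam) = q) :
    |y ^ (r - 2) * d| ^ q * y = y ^ lam * (y ^ (1 - (2 - r) * θ) * |d| ^ θ) ^ (1 - lam) := by
  rw [abs_mul, abs_of_pos (Real.rpow_pos_of_pos hy _), Real.mul_rpow (by positivity) (abs_nonneg d),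
    Real.mul_rpow (by positivity) (by positivity), ← Real.rpow_mul hy.le, ← Real.rpow_mul hy.le,
    ← Real.rpow_mul (abs_nonneg d), hθ, mul_right_comm, ← Real.rpow_add_one hy.ne',
    ← mul_assoc, ← Real.rpow_add hy]
  congr 2
  linear_combination (2 - r) * hθ

theorem down_moment_fisher_inequality_classical_general
    (P lam q r θ a : ℝ)
    (hP : 0 < P) (hlam : 1 / (1 + P) < lam) (hlam1 : lam ≠ 1)
    (hq : q ≠ 0) (hr : r ≠ 0)
    (hθ : θ = q / (1 - lam))
    (g₀ : ℝ → ℝ) (ha : 0 < a)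
    (hg₀ : ∀ x, g₀ x = a * (max (1 - (lam - 1) * |x| ^ P) 0) ^ ((1 : ℝ) / (lam - 1)))
    (hg₀_int : (∫ x, g₀ x) = 1)
    (xi xf : EReal)
    (f f' : ℝ → ℝ)
    (hf_nonneg : ∀ x, 0 ≤ f x)
    (hf_supp : ∀ x ∉ intIoo xi xf, f x = 0)
    (hf_int : (∫ x, f x) = 1)
    (hf' : ∀ x ∈ intIoo xi xf, HasDerivAt f (f' x) x)
    (hf'_neg : ∀ x ∈ intIoo xi xf, f' x < 0)
    (hfin_inner : ∀ x ∈ intIoo xi xf,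
      IntegrableOn (fun t => f t ^ (1 - (2 - r) * θ) * |f' t| ^ θ) (intIoo (x : EReal) xf))
    (hfin1 : IntegrableOn
      (fun x : ℝ =>
        |(∫ t in intIoo (x : EReal) xf, f t ^ (1 - (2 - r) * θ) * |f' t| ^ θ)| ^ P * f x)
      (intIoo xi xf))
    (hfin2 : IntegrableOn (fun x => |f x ^ (r - 2) * f' x| ^ q * f x) (intIoo xi xf))
    (hfin3 : Integrable (fun x => |x| ^ P * g₀ x))
    (hfin4 : Integrable (fun x => g₀ x ^ lam)) :
    (∫ x in intIoo xi xf,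
        |(∫ t in intIoo (x : EReal) xf, f t ^ (1 - (2 - r) * θ) * |f' t| ^ θ)| ^ P * f x)
        ^ ((1 : ℝ) / P)
      * ((∫ x in intIoo xi xf, |f x ^ (r - 2) * f' x| ^ q * f x)
          ^ ((1 : ℝ) / (q * r))) ^ (q * r / (lam - 1))
    ≥ (∫ x, |x| ^ P * g₀ x) ^ ((1 : ℝ) / P)
      / (∫ x, g₀ x ^ lam) ^ ((1 : ℝ) / (1 - lam)) := by
  obtain rfl : g₀ = genGaussian P lam a := funext hg₀
  set I := intIoo xi xf
  set W := fun t => f t ^ (1 - (2 - r) * θ) * |f' t| ^ θ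
  have hI : IsOpen I := isOpen_intIoo xi xf
  have hfpos : ∀ x ∈ I, 0 < f x := fun _ hx =>
    pos_of_hasDerivAt_neg hI (ordConnected_intIoo xi xf) (fun x _ => hf_nonneg x) hf' hf'_neg hx
  have hf : IntegrableOn f I := (Integrable.of_integral_ne_zero (hf_int ▸ one_ne_zero)).integrableOn
  -- `f'` itself need not be measurable, but on `I` it agrees with `deriv f`
  have hW : AEMeasurable W (volume.restrict I) :=
    ((hf.aemeasurable.pow_const (1 - (2 - r) * θ)).mul
      ((measurable_deriv f).abs.pow_const θ).aemeasurable).congr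
      ((ae_restrict_mem hI.measurableSet).mono fun x hx => by
        simp only [W, Pi.mul_apply, (hf' x hx).deriv])
  have hW0 : ∀ x ∈ I, 0 < W x := fun x hx => mul_pos (Real.rpow_pos_of_pos (hfpos x hx) _)
    (Real.rpow_pos_of_pos (abs_pos.2 (hf'_neg x hx).ne) _)
  have hinner : ∀ x ∈ I,
      |∫ t in intIoo (x : EReal) xf, W t| ^ P * f x = tailIntegral I W x ^ P * f x := fun x hx => by
    rw [intIoo_coe_eq_inter_Ioi hx, ← tailIntegral, abs_of_nonneg (tailIntegral_nonneg
      hI.measurableSet (fun y hy => (hW0 y hy).le) x)]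
  have hfisher : ∀ x ∈ I, |f x ^ (r - 2) * f' x| ^ q * f x = f x ^ lam * W x ^ (1 - lam) :=
    fun x hx => abs_rpow_mul_rpow_eq (hfpos x hx)
      (by rw [hθ]; exact div_mul_cancel₀ q (sub_ne_zero.2 hlam1.symm))
  have hexp : (1 : ℝ) / (q * r) * (q * r / (lam - 1)) = 1 / (lam - 1) := by
    field_simp
  rw [ge_iff_le, ← Real.rpow_mul (setIntegral_nonneg hI.measurableSet fun x _ =>
      mul_nonneg (Real.rpow_nonneg (abs_nonneg _) _) (hf_nonneg x)), hexp,
    setIntegral_congr_fun hI.measurableSet hinner, setIntegral_congr_fun hI.measurableSet hfisher]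
  exact down_moment_fisher_inequality_of_weight hP (lt_trans (by positivity) hlam) hlam1 ha
    hg₀_int hfin3 hfin4 hI (fun x _ => hf_nonneg x) hf
    (by rw [setIntegral_eq_integral_of_forall_compl_eq_zero hf_supp, hf_int]) hW hW0
    (fun x hx => intIoo_coe_eq_inter_Ioi hx ▸ hfin_inner x hx)
    (hfin1.congr_fun hinner hI.measurableSet) (hfin2.congr_fun hfisher hI.measurableSet)

/-- the down-moment–Fisher inequality (classical domain):
`Ξ_{P,(2-r)θ,θ}[f]^{1/P} · φ_{q,r}[f]^{qr/(λ-1)} ≥ σ_P[g]/N_λ[g]`. -/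
theorem down_moment_fisher_inequality_classical
    (P lam q r θ a : ℝ)
    (hP : 0 < P) (hlam : 1 / (1 + P) < lam) (hlam1 : lam ≠ 1)
    (hq : q ≠ 0) (hr : r ≠ 0)
    (hθ : θ = q / (1 - lam))
    (g₀ : ℝ → ℝ) (ha : 0 < a)
    (hg₀ : ∀ x, g₀ x = a * (max (1 - (lam - 1) * |x| ^ P) 0) ^ ((1 : ℝ) / (lam - 1)))
    (hg₀_int : (∫ x, g₀ x) = 1)
    (xi xf : EReal) (hif : xi < xf)
    (f f' : ℝ → ℝ)
    (hf_meas : Measurable f)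
    (hf_nonneg : ∀ x, 0 ≤ f x)
    (hf_supp : ∀ x ∉ intIoo xi xf, f x = 0)
    (hf_int : (∫ x, f x) = 1)
    (hf' : ∀ x ∈ intIoo xi xf, HasDerivAt f (f' x) x)
    (hf'_neg : ∀ x ∈ intIoo xi xf, f' x < 0)
    (hfin_inner : ∀ x ∈ intIoo xi xf,
      IntegrableOn (fun t => f t ^ (1 - (2 - r) * θ) * |f' t| ^ θ) (intIoo (x : EReal) xf))
    (hfin1 : IntegrableOn
      (fun x : ℝ =>
        |(∫ t in intIoo (x : EReal) xf, f t ^ (1 - (2 - r) * θ) * |f' t| ^ θ)| ^ P * f x)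
      (intIoo xi xf))
    (hfin2 : IntegrableOn (fun x => |f x ^ (r - 2) * f' x| ^ q * f x) (intIoo xi xf))
    (hfin3 : Integrable (fun x => |x| ^ P * g₀ x))
    (hfin4 : Integrable (fun x => g₀ x ^ lam)) :
    (∫ x in intIoo xi xf,
        |(∫ t in intIoo (x : EReal) xf, f t ^ (1 - (2 - r) * θ) * |f' t| ^ θ)| ^ P * f x)
        ^ ((1 : ℝ) / P)
      * ((∫ x in intIoo xi xf, |f x ^ (r - 2) * f' x| ^ q * f x)
          ^ ((1 : ℝ) / (q * r))) ^ (q * r / (lam - 1))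
    ≥ (∫ x, |x| ^ P * g₀ x) ^ ((1 : ℝ) / P)
      / (∫ x, g₀ x ^ lam) ^ ((1 : ℝ) / (1 - lam)) :=
  down_moment_fisher_inequality_classical_general P lam q r θ a hP hlam hlam1 hq hr hθ g₀ ha hg₀
    hg₀_int xi xf f f' hf_nonneg hf_supp hf_int hf' hf'_neg hfin_inner hfin1 hfin2 hfin3 hfin4
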